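/- arXiv:1708.03046 — 2 statements merged into one kernel-verified Lean document; each statement's English description precedes it below -/
import Mathlib

section
/- Let c > 0 be a constant and let γ = γ_l be any sequence with −c/2 < γ_l ≤ 0 for all l. Then J_c(γ) ≥ I_c(γ) for all large l, and log J_c(γ) = (1 + o(1))·[(c − γ)·√(2 n log p / k) − (c − γ)²·n/(2k) + log(n/(2 p log p))] as l → ∞. -/
/-!
Write `δ = c - γ` and `R = √(2k log(p-k)/n)`. Once `R > δ`, the inequality defining `J_c(γ)` is
`R - δ < √(2k log(k/J)/n)`, i.e. `log J < T := log k - n (R - δ)² / (2k)`, so `J_c(γ) = ⌈e^T⌉ - 1`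
and `log J_c(γ) = T + O(1)`. Expanding the square, `T` differs from the main term `X` only through
`log (k/n)`, `log (p/(p-k))` and `log log p`, which the growth conditions bound by
`O(log log p)`; likewise `X = δ √(2n log p/k) + O(log log p)`. The leading term
`δ √(2n log p/k) ≥ c √(2/c₅) (log p)^0.005` dominates `log log p`, hence
`log J_c(γ) ~ T ~ X`. Finally `I_c` is monotone in `γ` and `J_c(γ) = I_c(-γ)` with `γ ≤ -γ`.
-/

open Filter Topology

/-- `Ic k n p c γ` is the largest integer `I ∈ {1, …, k}` such that
`γ + √(2 k log(k/I)/n) > √(2 k log(p−k)/n) − c`, and `0` if no such `I` exists. -/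
noncomputable def Ic (k n p : ℕ) (c γ : ℝ) : ℕ :=
  sSup {I : ℕ | 1 ≤ I ∧ I ≤ k ∧
    Real.sqrt (2 * k * Real.log ((p : ℝ) - k) / n) - c <
      γ + Real.sqrt (2 * k * Real.log ((k : ℝ) / I) / n)}

/-- `Jc k n p c γ` is the largest integer `J ∈ {1, …, k}` such that
`−γ + √(2 k log(k/J)/n) > √(2 k log(p−k)/n) − c`, and `0` if no such `J` exists. -/
noncomputable def Jc (k n p : ℕ) (c γ : ℝ) : ℕ := Ic k n p c (-γ)

open Asymptotics Real

lemma abs_log_sub_log_le {a b x y : ℝ} (ha : 0 < a) (hx : 0 < x) (hay : a * x ≤ y)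
    (hyb : y ≤ b * x) : |log y - log x| ≤ |log a| + |log b| := by
  have hy : 0 < y := (mul_pos ha hx).trans_le hay
  have hb : 0 < b := pos_of_mul_pos_left (hy.trans_le hyb) hx.le
  have h₁ : log a + log x ≤ log y := by
    rw [← log_mul ha.ne' hx.ne']; exact log_le_log (by positivity) hay
  have h₂ : log y ≤ log b + log x := by
    rw [← log_mul hb.ne' hx.ne']; exact log_le_log hy hyb
  rw [abs_le]
  constructor <;> linarith [neg_abs_le (log a), le_abs_self (log b), abs_nonneg (log a),
    abs_nonneg (log b)]

lemma abs_sqrt_sub_sqrt_le {x y : ℝ} (hx : 0 ≤ x) (hy : 0 ≤ y) : |√x - √y| ≤ √|x - y| := by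
  have key : ∀ a b : ℝ, 0 ≤ a → a ≤ b → √b - √a ≤ √(b - a) := fun a b ha hab =>
    sub_le_iff_le_add'.2 <| sqrt_le_iff.2 ⟨by positivity, by
      nlinarith [sq_sqrt ha, sq_sqrt (sub_nonneg.2 hab), sqrt_nonneg a, sqrt_nonneg (b - a)]⟩
  rcases le_total x y with h | h
  · rw [abs_sub_comm, abs_of_nonneg (sub_nonneg.2 (sqrt_le_sqrt h)), abs_sub_comm,
      abs_of_nonneg (sub_nonneg.2 h)]
    exact key x y hx h
  · rw [abs_of_nonneg (sub_nonneg.2 (sqrt_le_sqrt h)), abs_of_nonneg (sub_nonneg.2 h)]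
    exact key y x hy h

lemma isBigO_of_abs_le {α : Type*} {l : Filter α} {f g : α → ℝ} {a b : ℝ}
    (hg : Tendsto g l atTop) (hf : ∀ᶠ x in l, |f x| ≤ a + b * g x) : f =O[l] g := by
  refine IsBigO.of_bound (|a| + |b|) ?_
  filter_upwards [hg.eventually_ge_atTop 1, hf] with x hgx hfx
  rw [norm_eq_abs, norm_eq_abs, abs_of_pos (by linarith : 0 < g x)]
  nlinarith [le_abs_self a, le_abs_self b, abs_nonneg a]

lemma isEquivalent_of_abs_sub_le {α : Type*} {l : Filter α} {u v : α → ℝ} {C : ℝ}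
    (hv : Tendsto v l atTop) (h : ∀ᶠ x in l, |u x - v x| ≤ C) : u ~[l] v :=
  (IsBigO.of_bound C (h.mono fun x hx => by simpa using hx)).trans_isLittleO
    ((isLittleO_one_left_iff ℝ).2 (tendsto_norm_atTop_atTop.comp hv))

lemma isLittleO_log_of_mul_rpow_le {α : Type*} {l : Filter α} {L A : α → ℝ} {D r : ℝ}
    (hD : 0 < D) (hr : 0 < r) (hL : Tendsto L l atTop) (hA : ∀ᶠ x in l, D * L x ^ r ≤ A x) :
    (fun x => log (L x)) =o[l] A := by
  refine ((isLittleO_log_rpow_atTop hr).comp_tendsto hL).trans_isBigO (.of_bound D⁻¹ ?_)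
  filter_upwards [hA, hL.eventually_ge_atTop 0] with x hx hL0
  have hr : 0 ≤ L x ^ r := rpow_nonneg hL0 r
  rw [Function.comp_apply, norm_of_nonneg hr, norm_of_nonneg ((mul_nonneg hD.le hr).trans hx),
    inv_mul_eq_div, le_div_iff₀ hD]
  linarith

lemma natCeil_sub_one_isGreatest {x : ℝ} (hx : 1 < x) :
    IsGreatest {J : ℕ | 1 ≤ J ∧ (J : ℝ) < x} (⌈x⌉₊ - 1) := by
  have h2 : 1 < ⌈x⌉₊ := Nat.lt_ceil.2 (by simpa using hx)
  refine ⟨⟨by omega, ?_⟩, fun J hJ => ?_⟩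
  · rw [Nat.cast_sub h2.le, Nat.cast_one]
    linarith [Nat.ceil_lt_add_one (by linarith : 0 ≤ x)]
  · have := Nat.lt_ceil.2 hJ.2
    omega

lemma abs_log_sSup_sub_log_le {x : ℝ} (hx : 2 ≤ x) :
    |log (sSup {J : ℕ | 1 ≤ J ∧ (J : ℝ) < x} : ℕ) - log x| ≤ log 2 := by
  have hJ := natCeil_sub_one_isGreatest (by linarith : 1 < x)
  rw [hJ.csSup_eq]
  have hlt : ((⌈x⌉₊ - 1 : ℕ) : ℝ) < x := hJ.1.2
  have hge : x / 2 ≤ ((⌈x⌉₊ - 1 : ℕ) : ℝ) := by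
    rw [Nat.cast_sub (Nat.one_le_cast.1 ((by linarith : (1 : ℝ) ≤ x).trans (Nat.le_ceil x))),
      Nat.cast_one]
    linarith [Nat.le_ceil x]
  have h₁ := log_le_log (by linarith) hge
  have h₂ := log_le_log (by linarith) hlt.le
  rw [log_div (by positivity) two_ne_zero] at h₁
  rw [abs_le]
  constructor <;> linarith [log_pos one_lt_two]

lemma Ic_mono (k n p : ℕ) (c : ℝ) : Monotone (Ic k n p c) := fun _ _ h =>
  csSup_le_csSup' ⟨k, fun _ hI => hI.2.1⟩ fun _ ⟨h₁, h₂, h₃⟩ => ⟨h₁, h₂, by linarith⟩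

noncomputable def logCutoff (K N P δ : ℝ) : ℝ :=
  log K - N * (√(2 * K * log (P - K) / N) - δ) ^ 2 / (2 * K)

lemma Ic_eq_sSup {k n p : ℕ} {c γ : ℝ} (hk : 0 < k) (hn : 0 < n)
    (hR : c + γ < √(2 * k * log ((p : ℝ) - k) / n)) :
    Ic k n p c γ = sSup {I : ℕ | 1 ≤ I ∧ (I : ℝ) < exp (logCutoff k n p (c + γ))} := by
  set R := √(2 * k * log ((p : ℝ) - k) / n)
  have hK : (0 : ℝ) < k := by exact_mod_cast hk
  have hN : (0 : ℝ) < n := by exact_mod_cast hn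
  have hcut : exp (logCutoff k n p (c + γ)) < k := by
    rw [← lt_log_iff_exp_lt hK, logCutoff]
    have : 0 < n * (R - (c + γ)) ^ 2 / (2 * k) :=
      div_pos (mul_pos hN (pow_pos (sub_pos.2 hR) 2)) (by positivity)
    linarith
  unfold Ic
  congr 1
  ext I
  refine and_congr_right fun hI => ?_
  have hI0 : (0 : ℝ) < I := by exact_mod_cast hI
  have key : R - c < γ + √(2 * k * log (k / I) / n) ↔
      (I : ℝ) < exp (logCutoff k n p (c + γ)) := by
    rw [← log_lt_iff_lt_exp hI0, logCutoff, lt_sub_comm, div_lt_iff₀ (by positivity),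
      ← sub_lt_iff_lt_add', sub_sub, lt_sqrt (by linarith), lt_div_iff₀ hN,
      log_div hK.ne' hI0.ne']
    constructor <;> intro h <;> linarith
  exact ⟨fun h => key.1 h.2, fun h => ⟨by exact_mod_cast (h.trans hcut).le, key.2 h⟩⟩

lemma abs_log_Jc_sub_logCutoff_le {k n p : ℕ} {c γ : ℝ} (hk : 0 < k) (hn : 0 < n)
    (hR : c - γ < √(2 * k * log ((p : ℝ) - k) / n)) (hT : log 2 ≤ logCutoff k n p (c - γ)) :
    |log (Jc k n p c γ) - logCutoff k n p (c - γ)| ≤ log 2 := by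
  have hJ := Ic_eq_sSup (γ := -γ) hk hn hR
  rw [← sub_eq_add_neg] at hJ
  rw [Jc, hJ]
  have h2 : 2 ≤ exp (logCutoff k n p (c - γ)) := by
    rw [← exp_log two_pos]; exact exp_le_exp.2 hT
  simpa only [Real.log_exp] using abs_log_sSup_sub_log_le h2

lemma logCutoff_eq {K N P : ℝ} (δ : ℝ) (hK : 0 < K) (hN : 0 < N) (hPK : 0 ≤ log (P - K)) :
    logCutoff K N P δ =
      log K - log (P - K) + δ * √(2 * N * log (P - K) / K) - δ ^ 2 * N / (2 * K) := by
  have hR := sq_sqrt (by positivity : 0 ≤ 2 * K * log (P - K) / N)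
  have hNR : √(2 * N * log (P - K) / K) = N / K * √(2 * K * log (P - K) / N) := by
    rw [show 2 * N * log (P - K) / K = (N / K) ^ 2 * (2 * K * log (P - K) / N) by
      field_simp, sqrt_mul (sq_nonneg _), sqrt_sq (by positivity)]
  rw [logCutoff, hNR]
  field_simp
  linear_combination (-N) * hR - 2 * K * log (P - K) * mul_inv_cancel₀ hN.ne'

noncomputable def mainTerm (K N P δ : ℝ) : ℝ :=
  δ * √(2 * N * log P / K) - δ ^ 2 * N / (2 * K) + log (N / (2 * P * log P))

lemma abs_log_sub_sub_log_le {K P : ℝ} (hK : 0 ≤ K) (hKP : K ≤ 0.99 * P) (hP : 0 < P) :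
    |log (P - K) - log P| ≤ log 100 := by
  have h := abs_log_sub_log_le (a := 0.01) (b := 1) (x := P) (y := P - K) (by norm_num) hP
    (by linarith) (by linarith)
  rwa [log_one, abs_zero, add_zero, show (0.01 : ℝ) = 100⁻¹ by norm_num, log_inv, abs_neg,
    abs_of_pos (log_pos (by norm_num))] at h

lemma abs_logCutoff_sub_mainTerm_le {K N P δ c₄ c₅ d : ℝ} (hc₄ : 0 < c₄) (hc₅ : 0 < c₅)
    (hN : 0 < N) (hKN : c₄ * N ≤ K) (hKP : K ≤ 0.99 * P)
    (hKL : K ≤ c₅ * N * log P ^ (0.99 : ℝ)) (hP : 100 ≤ P) (hδ : |δ| ≤ d) :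
    |logCutoff K N P δ - mainTerm K N P δ| ≤
      |log c₄| + |log c₅| + log 200 + d * √(2 * log 100 / c₄) + 2 * log (log P) := by
  have hK : 0 < K := (mul_pos hc₄ hN).trans_le hKN
  have hL : 1 ≤ log P := by
    rw [le_log_iff_exp_le (by linarith)]
    linarith [exp_one_lt_d9]
  have hPK := abs_log_sub_sub_log_le hK.le hKP (by linarith)
  have hPK0 : 0 ≤ log (P - K) := log_nonneg (by linarith)
  have hlogK : |log K - log N| ≤ |log c₄| + |log c₅| + log (log P) := by
    have h := abs_log_sub_log_le hc₄ hN hKN (by linarith : K ≤ c₅ * log P ^ (0.99 : ℝ) * N)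
    rw [log_mul hc₅.ne' (by positivity), log_rpow (by linarith)] at h
    have := abs_add_le (log c₅) (0.99 * log (log P))
    rw [abs_of_nonneg (mul_nonneg (by norm_num) (log_nonneg hL))] at this
    linarith [log_nonneg hL]
  have hsqrt : |δ * (√(2 * N * log (P - K) / K) - √(2 * N * log P / K))| ≤
      d * √(2 * log 100 / c₄) := by
    rw [abs_mul]
    refine mul_le_mul hδ ?_ (abs_nonneg _) ((abs_nonneg δ).trans hδ)
    refine (abs_sqrt_sub_sqrt_le (div_nonneg (mul_nonneg (by positivity) hPK0) hK.le)
      (div_nonneg (mul_nonneg (by positivity) (by linarith)) hK.le)).trans (sqrt_le_sqrt ?_)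
    rw [← sub_div, ← mul_sub, abs_div, abs_mul, abs_of_pos hK, abs_of_pos (by positivity),
      div_le_div_iff₀ hK hc₄]
    nlinarith [abs_nonneg (log (P - K) - log P)]
  have h200 : log 200 = log 2 + log 100 := by rw [← log_mul] <;> norm_num
  rw [logCutoff_eq δ hK hN hPK0, mainTerm,
    log_div hN.ne' (by positivity), log_mul (by positivity) (by positivity),
    log_mul (by norm_num) (by positivity)]
  obtain ⟨h₁, h₂⟩ := abs_le.1 hlogK
  obtain ⟨h₃, h₄⟩ := abs_le.1 hPK
  obtain ⟨h₅, h₆⟩ := abs_le.1 hsqrt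
  rw [abs_le]
  constructor <;> linarith [log_nonneg hL, log_pos one_lt_two]

lemma abs_mainTerm_sub_le {K N P δ c₁ c₂ c₃ c₄ d : ℝ} (hc₁ : 0 < c₁) (hc₄ : 0 < c₄)
    (hN : 0 < N) (hKN : c₄ * N ≤ K) (hNP : c₁ * P / log P ^ c₂ ≤ N) (hNP' : N ≤ c₃ * P)
    (hP : 0 < P) (hL : 1 ≤ log P) (hδ : |δ| ≤ d) :
    |mainTerm K N P δ - δ * √(2 * N * log P / K)| ≤
      d ^ 2 / (2 * c₄) + |log c₁| + |log c₃| + log 2 + (|c₂| + 1) * log (log P) := by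
  have hK : 0 < K := (mul_pos hc₄ hN).trans_le hKN
  have hlogN : |log N - log P| ≤ |log c₁| + |log c₃| + |c₂| * log (log P) := by
    have h := abs_log_sub_log_le (a := c₁ / log P ^ c₂) (b := c₃) (by positivity) hP
      (by rwa [div_mul_eq_mul_div]) hNP'
    rw [log_div hc₁.ne' (by positivity), log_rpow (by linarith)] at h
    have := abs_sub (log c₁) (c₂ * log (log P))
    rw [abs_mul, abs_of_nonneg (log_nonneg hL)] at this
    linarith
  have hquad : δ ^ 2 * N / (2 * K) ≤ d ^ 2 / (2 * c₄) := by
    have hδ2 : δ ^ 2 ≤ d ^ 2 := by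
      rw [← sq_abs δ]; exact pow_le_pow_left₀ (abs_nonneg δ) hδ 2
    rw [div_le_div_iff₀ (by positivity) (by positivity)]
    nlinarith [mul_le_mul_of_nonneg_left hKN (sq_nonneg d), mul_le_mul_of_nonneg_right hδ2 hN.le]
  have hquad' : 0 ≤ δ ^ 2 * N / (2 * K) := by positivity
  rw [mainTerm, log_div hN.ne' (by positivity), log_mul (by positivity) (by positivity),
    log_mul (by norm_num) hP.ne']
  obtain ⟨h₁, h₂⟩ := abs_le.1 hlogN
  rw [abs_le]
  constructor <;> linarith [log_nonneg hL, log_pos one_lt_two, abs_nonneg (log c₁),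
    abs_nonneg (log c₃), abs_nonneg c₂]

lemma lt_sqrt_of_sq_lt_mul_log {K N P δ c₄ : ℝ} (hc₄ : 0 < c₄) (hN : 0 < N)
    (hKN : c₄ * N ≤ K) (hKP : K ≤ 0.99 * P) (hδ : δ ^ 2 < 2 * c₄ * (log P - log 100)) :
    δ < √(2 * K * log (P - K) / N) := by
  have hK : 0 < K := (mul_pos hc₄ hN).trans_le hKN
  have hPK := (abs_le.1 (abs_log_sub_sub_log_le hK.le hKP (by linarith))).1
  have h₁ : δ ^ 2 < 2 * c₄ * log (P - K) := hδ.trans_le (by gcongr; linarith)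
  have hl : 0 < log (P - K) := by nlinarith [sq_nonneg δ]
  refine lt_sqrt_of_sq_lt ?_
  rw [lt_div_iff₀ hN]
  nlinarith [mul_le_mul_of_nonneg_right hKN hl.le]

lemma sqrt_two_div_mul_rpow_le_sqrt {K N L c₅ : ℝ} (hc₅ : 0 < c₅) (hK : 0 < K) (hL : 0 < L)
    (hKL : K ≤ c₅ * N * L ^ (0.99 : ℝ)) : √(2 / c₅) * L ^ (0.005 : ℝ) ≤ √(2 * N * L / K) := by
  have hsq : L ^ (0.005 : ℝ) = √(L ^ (0.01 : ℝ)) := by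
    rw [sqrt_eq_rpow, ← rpow_mul hL.le]; norm_num
  have hL1 : L ^ (0.01 : ℝ) * L ^ (0.99 : ℝ) = L := by
    rw [← rpow_add hL]; norm_num
  rw [hsq, ← sqrt_mul (by positivity)]
  refine sqrt_le_sqrt ?_
  rw [le_div_iff₀ hK]
  calc 2 / c₅ * L ^ (0.01 : ℝ) * K ≤ 2 / c₅ * L ^ (0.01 : ℝ) * (c₅ * N * L ^ (0.99 : ℝ)) := by
        gcongr
    _ = 2 * N * (L ^ (0.01 : ℝ) * L ^ (0.99 : ℝ)) := by field_simp
    _ = 2 * N * L := by rw [hL1]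

theorem isEquivalent_log_Jc_mainTerm {k n p : ℕ → ℕ} {c₁ c₂ c₃ c₄ c₅ c : ℝ} {γ : ℕ → ℝ}
    (hn : Tendsto n atTop atTop) (hp : Tendsto p atTop atTop)
    (hc₁ : 0 < c₁) (hc₄ : 0 < c₄) (hc₅ : 0 < c₅)
    (hnp : ∀ l, c₁ * p l / log (p l) ^ c₂ ≤ (n l : ℝ) ∧ (n l : ℝ) ≤ c₃ * p l)
    (hkn : ∀ l, c₄ * n l ≤ (k l : ℝ) ∧
      (k l : ℝ) ≤ min ((0.99 : ℝ) * p l) (c₅ * n l * log (p l) ^ (0.99 : ℝ)))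
    (hc : 0 < c) (hγ : ∀ l, -c / 2 < γ l ∧ γ l ≤ 0) :
    (fun l => log (Jc (k l) (n l) (p l) c (γ l))) ~[atTop]
      fun l => mainTerm (k l) (n l) (p l) (c - γ l) := by
  set L : ℕ → ℝ := fun l => log (p l)
  set A : ℕ → ℝ := fun l => (c - γ l) * √(2 * n l * L l / k l)
  set T : ℕ → ℝ := fun l => logCutoff (k l) (n l) (p l) (c - γ l)
  have hP : Tendsto (fun l => (p l : ℝ)) atTop atTop := tendsto_natCast_atTop_atTop.comp hp
  have hL : Tendsto L atTop atTop := tendsto_log_atTop.comp hP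
  have hLL : Tendsto (fun l => log (L l)) atTop atTop := tendsto_log_atTop.comp hL
  have hδ : ∀ l, |c - γ l| ≤ 3 * c / 2 := fun l =>
    abs_le.2 ⟨by linarith [hγ l], by linarith [hγ l]⟩
  have hev : ∀ᶠ l in atTop, 0 < (n l : ℝ) ∧ 0 < (k l : ℝ) ∧ 100 ≤ (p l : ℝ) ∧ 1 ≤ L l ∧
      (3 * c / 2) ^ 2 < 2 * c₄ * (L l - log 100) := by
    have hq : Tendsto (fun l => 2 * c₄ * (L l - log 100)) atTop atTop :=
      (tendsto_atTop_add_const_right _ _ hL).const_mul_atTop (by positivity)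
    filter_upwards [hn.eventually_gt_atTop 0, hP.eventually_ge_atTop 100,
      hL.eventually_ge_atTop 1, hq.eventually_gt_atTop _] with l h₁ h₂ h₃ h₄
    have hn0 : (0 : ℝ) < n l := by exact_mod_cast h₁
    exact ⟨hn0, (mul_pos hc₄ hn0).trans_le (hkn l).1, h₂, h₃, h₄⟩
  have hAge : ∀ᶠ l in atTop, c * √(2 / c₅) * L l ^ (0.005 : ℝ) ≤ A l := by
    filter_upwards [hev] with l hl
    obtain ⟨-, hK, -, hL1, -⟩ := hl
    rw [mul_assoc]
    exact mul_le_mul (by linarith [hγ l])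
      (sqrt_two_div_mul_rpow_le_sqrt hc₅ hK (by linarith) (le_min_iff.1 (hkn l).2).2)
      (by positivity) (by linarith [hγ l])
  have hAtop : Tendsto A atTop atTop := tendsto_atTop_mono' _ hAge
    (((tendsto_rpow_atTop (by norm_num)).comp hL).const_mul_atTop (by positivity))
  have hA := isLittleO_log_of_mul_rpow_le (by positivity) (by norm_num) hL hAge
  have hXA : (fun l => mainTerm (k l) (n l) (p l) (c - γ l)) ~[atTop] A :=
    (isBigO_of_abs_le hLL (hev.mono fun l ⟨hN, _, _, hL1, _⟩ =>
      abs_mainTerm_sub_le hc₁ hc₄ hN (hkn l).1 (hnp l).1 (hnp l).2 (by linarith) hL1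
        (hδ l))).trans_isLittleO hA
  have hTX : T ~[atTop] fun l => mainTerm (k l) (n l) (p l) (c - γ l) :=
    ((isBigO_of_abs_le hLL (hev.mono fun l ⟨hN, _, hP100, _, _⟩ =>
      abs_logCutoff_sub_mainTerm_le hc₄ hc₅ hN (hkn l).1 (le_min_iff.1 (hkn l).2).1
        (le_min_iff.1 (hkn l).2).2 hP100 (hδ l))).trans_isLittleO hA).trans_isBigO
      hXA.symm.isBigO
  have hTtop : Tendsto T atTop atTop := hTX.symm.tendsto_atTop (hXA.symm.tendsto_atTop hAtop)
  have hJT : (fun l => log (Jc (k l) (n l) (p l) c (γ l))) ~[atTop] T := by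
    refine isEquivalent_of_abs_sub_le (C := log 2) hTtop ?_
    filter_upwards [hev, hTtop.eventually_ge_atTop (log 2)] with l hl hT
    obtain ⟨hN, hK, -, -, hR⟩ := hl
    exact abs_log_Jc_sub_logCutoff_le (by exact_mod_cast hK) (by exact_mod_cast hN)
      (lt_sqrt_of_sq_lt_mul_log hc₄ hN (hkn l).1 (le_min_iff.1 (hkn l).2).1
        ((by nlinarith [hγ l, hδ l] : (c - γ l) ^ 2 ≤ (3 * c / 2) ^ 2).trans_lt hR)) hT
  exact hJT.trans hTX

theorem Jc_asymptotics_general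
    (k n p : ℕ → ℕ)
    (hn : Tendsto n atTop atTop) (hp : Tendsto p atTop atTop)
    (c₁ c₂ c₃ c₄ c₅ : ℝ)
    (hc₁ : 0 < c₁) (hc₄ : 0 < c₄) (hc₅ : 0 < c₅)
    (hnp : ∀ l, c₁ * p l / (Real.log (p l)) ^ c₂ ≤ (n l : ℝ) ∧ (n l : ℝ) ≤ c₃ * p l)
    (hkn : ∀ l, c₄ * n l ≤ (k l : ℝ) ∧
        (k l : ℝ) ≤ min ((0.99 : ℝ) * p l) (c₅ * n l * (Real.log (p l)) ^ (0.99 : ℝ)))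
    (c : ℝ) (hc : 0 < c)
    (γ : ℕ → ℝ) (hγ : ∀ l, -c / 2 < γ l ∧ γ l ≤ 0) :
    (∀ᶠ l in atTop, Ic (k l) (n l) (p l) c (γ l) ≤ Jc (k l) (n l) (p l) c (γ l)) ∧
    ∃ e : ℕ → ℝ, Tendsto e atTop (𝓝 0) ∧
      ∀ᶠ l in atTop, Real.log (Jc (k l) (n l) (p l) c (γ l)) =
        (1 + e l) * ((c - γ l) * Real.sqrt (2 * n l * Real.log (p l) / k l)
          - (c - γ l) ^ 2 * n l / (2 * k l) + Real.log (n l / (2 * p l * Real.log (p l)))) := by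
  refine ⟨.of_forall fun l => Ic_mono _ _ _ _ (by linarith [(hγ l).2]), ?_⟩
  obtain ⟨φ, hφ, hJ⟩ :=
    (isEquivalent_log_Jc_mainTerm hn hp hc₁ hc₄ hc₅ hnp hkn hc hγ).exists_eq_mul
  refine ⟨fun l => φ l - 1, by simpa using hφ.sub_const 1, ?_⟩
  filter_upwards [hJ] with l hl
  rw [hl, Pi.mul_apply, add_sub_cancel, mainTerm]

theorem Jc_asymptotics
    (k n p : ℕ → ℕ)
    (hk : Tendsto k atTop atTop) (hn : Tendsto n atTop atTop) (hp : Tendsto p atTop atTop)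
    (c₁ c₂ c₃ c₄ c₅ : ℝ)
    (hc₁ : 0 < c₁) (hc₂ : 0 < c₂) (hc₃ : 0 < c₃) (hc₄ : 0 < c₄) (hc₅ : 0 < c₅)
    (hnp : ∀ l, c₁ * p l / (Real.log (p l)) ^ c₂ ≤ (n l : ℝ) ∧ (n l : ℝ) ≤ c₃ * p l)
    (hkn : ∀ l, c₄ * n l ≤ (k l : ℝ) ∧
        (k l : ℝ) ≤ min ((0.99 : ℝ) * p l) (c₅ * n l * (Real.log (p l)) ^ (0.99 : ℝ)))
    (c : ℝ) (hc : 0 < c)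
    (γ : ℕ → ℝ) (hγ : ∀ l, -c / 2 < γ l ∧ γ l ≤ 0) :
    (∀ᶠ l in atTop, Ic (k l) (n l) (p l) c (γ l) ≤ Jc (k l) (n l) (p l) c (γ l)) ∧
    ∃ e : ℕ → ℝ, Tendsto e atTop (𝓝 0) ∧
      ∀ᶠ l in atTop, Real.log (Jc (k l) (n l) (p l) c (γ l)) =
        (1 + e l) * ((c - γ l) * Real.sqrt (2 * n l * Real.log (p l) / k l)
          - (c - γ l) ^ 2 * n l / (2 * k l) + Real.log (n l / (2 * p l * Real.log (p l)))) :=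
  Jc_asymptotics_general k n p hn hp c₁ c₂ c₃ c₄ c₅ hc₁ hc₄ hc₅ hnp hkn c hc γ hγ
end

section
/- Let A be a j×j real symmetric positive definite matrix all of whose eigenvalues lie in the interval [1 − θ, 1 + θ] for some 0 < θ < 1, and let s ∈ {−1, +1}^j be any sign vector. Then ‖A^{−1}s − s‖₂ ≤ θ·√j/(1 − θ). Consequently, if θ·√j/(1 − θ) < 1, then every coordinate of A^{−1}s has the same sign as the corresponding coordinate of s, i.e., s_i·(A^{−1}s)_i > 0 for all i ∈ {1, …, j}. -/
/-!
`A⁻¹ - 1 = f(A)` for `f x = x⁻¹ - 1`, and `|f| ≤ θ / (1 - θ)` on `[1 - θ, 1 + θ]`, so the spectral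
theorem bounds the operator norm of `A⁻¹ - 1` by `θ / (1 - θ)`. Applied to a sign vector, whose
Euclidean norm is `√j`, this gives the distance bound; each coordinate of `A⁻¹ s - s` is then
smaller than `1` in absolute value, which cannot flip the sign of `sᵢ = ±1`.
-/

open scoped Matrix.Norms.L2Operator ComplexOrder
open Matrix WithLp

lemma abs_inv_sub_one_le_div {θ x : ℝ} (hθ : θ < 1) (hx : x ∈ Set.Icc (1 - θ) (1 + θ)) :
    |x⁻¹ - 1| ≤ θ / (1 - θ) := by
  obtain ⟨hlo, hhi⟩ := hx
  have hx0 : 0 < x := by linarith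
  have hnum : |1 - x| ≤ θ := abs_le.mpr ⟨by linarith, by linarith⟩
  calc |x⁻¹ - 1| = |1 - x| / x := by
        rw [← abs_of_pos hx0, ← abs_div, abs_of_pos hx0, sub_div, one_div, div_self hx0.ne']
    _ ≤ θ / (1 - θ) := div_le_div₀ (by linarith) hnum (by linarith) hlo

lemma pos_mul_of_abs_sub_lt_one {s x : ℝ} (hs : s = 1 ∨ s = -1) (h : |x - s| < 1) :
    0 < s * x := by
  rw [abs_lt] at h
  rcases hs with rfl | rfl <;> linarith

lemma EuclideanSpace.norm_toLp_real {n : Type*} [Fintype n] (v : n → ℝ) :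
    ‖toLp 2 v‖ = √(∑ i, v i ^ 2) := by
  simp [EuclideanSpace.norm_eq]

lemma EuclideanSpace.norm_toLp_eq_sqrt_card {n : Type*} [Fintype n] {s : n → ℝ}
    (hs : ∀ i, s i = 1 ∨ s i = -1) : ‖toLp 2 s‖ = √(Fintype.card n) := by
  have hsq : ∀ i, s i ^ 2 = 1 := fun i ↦ by rcases hs i with h | h <;> simp [h]
  simp [EuclideanSpace.norm_toLp_real, hsq]

namespace Matrix

variable {𝕜 n : Type*} [RCLike 𝕜] [Fintype n] [DecidableEq n]

lemma IsHermitian.l2_opNorm_cfc_le {A : Matrix n n 𝕜} (hA : A.IsHermitian) {f : ℝ → ℝ} {c : ℝ}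
    (hc : 0 ≤ c) (hf : ∀ i, |f (hA.eigenvalues i)| ≤ c) : ‖cfc f A‖ ≤ c := by
  rw [hA.cfc_eq, IsHermitian.cfc, Unitary.conjStarAlgAut_apply, ← Unitary.coe_star,
    CStarRing.norm_mul_coe_unitary, CStarRing.norm_coe_unitary_mul, l2_opNorm_diagonal,
    pi_norm_le_iff_of_nonneg hc]
  intro i
  simpa using hf i

lemma PosDef.inv_sub_one_eq_cfc {A : Matrix n n 𝕜} (hA : A.PosDef) :
    A⁻¹ - 1 = cfc (fun x : ℝ ↦ x⁻¹ - 1) A := by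
  rw [cfc_sub (fun x : ℝ ↦ x⁻¹) (fun _ ↦ 1) A (A.finite_real_spectrum.continuousOn _)]
  congr 1
  · exact (nonsing_inv_eq_ringInverse A).trans (cfc_ringInverse_id A hA.isUnit hA.isHermitian).symm
  · exact (cfc_const_one ℝ A hA.isHermitian).symm

lemma PosDef.l2_opNorm_inv_sub_one_le {A : Matrix n n 𝕜} (hA : A.PosDef) {θ : ℝ}
    (hθ0 : 0 ≤ θ) (hθ1 : θ < 1) (heig : ∀ i, hA.isHermitian.eigenvalues i ∈ Set.Icc (1 - θ) (1 + θ)) :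
    ‖A⁻¹ - 1‖ ≤ θ / (1 - θ) := by
  rw [hA.inv_sub_one_eq_cfc]
  exact hA.isHermitian.l2_opNorm_cfc_le (div_nonneg hθ0 (by linarith))
    fun i ↦ abs_inv_sub_one_le_div hθ1 (heig i)

end Matrix

theorem inverse_sign_preservation
    (j : ℕ) (θ : ℝ) (hθ0 : 0 < θ) (hθ1 : θ < 1)
    (A : Matrix (Fin j) (Fin j) ℝ) (hA : A.PosDef)
    -- all eigenvalues of A lie in [1 − θ, 1 + θ]
    (heig : ∀ i, 1 - θ ≤ hA.1.eigenvalues i ∧ hA.1.eigenvalues i ≤ 1 + θ)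
    (s : Fin j → ℝ) (hs : ∀ i, s i = 1 ∨ s i = -1) :
    Real.sqrt (∑ i, (A⁻¹.mulVec s i - s i) ^ 2) ≤ θ * Real.sqrt j / (1 - θ) ∧
    (θ * Real.sqrt j / (1 - θ) < 1 → ∀ i, 0 < s i * A⁻¹.mulVec s i) := by
  have hdist : ‖toLp 2 (A⁻¹ *ᵥ s - s)‖ ≤ θ * √j / (1 - θ) :=
    calc ‖toLp 2 (A⁻¹ *ᵥ s - s)‖ = ‖toLp 2 ((A⁻¹ - 1) *ᵥ (toLp 2 s).ofLp)‖ := by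
          rw [sub_mulVec, one_mulVec]
      _ ≤ ‖A⁻¹ - 1‖ * ‖toLp 2 s‖ := l2_opNorm_mulVec _ _
      _ ≤ θ / (1 - θ) * √j := by
          rw [EuclideanSpace.norm_toLp_eq_sqrt_card hs, Fintype.card_fin]
          gcongr
          exact hA.l2_opNorm_inv_sub_one_le hθ0.le hθ1 heig
      _ = θ * √j / (1 - θ) := div_mul_eq_mul_div θ (1 - θ) √j
  refine ⟨by simpa only [EuclideanSpace.norm_toLp_real, Pi.sub_apply] using hdist,
    fun hlt i ↦ pos_mul_of_abs_sub_lt_one (hs i) ?_⟩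
  exact (PiLp.norm_apply_le _ i).trans_lt (hdist.trans_lt hlt)
end
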